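/- Let U(p) = β√(1+‖p‖²) on ℝ^d with β > 0. Then ∇U(p)·(p/‖p‖) = β‖p‖/√(1+‖p‖²) ≥ β/√2 for all ‖p‖ ≥ 1. Consequently, for W(p) = e^{c‖p‖} with 0 < c and R ≥ 1 such that (d−1)/R + c ≤ β/(2√2), one has ΔW(p) − ∇U(p)·∇W(p) ≤ −(cβ/(4√2)) W(p) for all ‖p‖ ≥ R. -/

import Mathlib

/-- The Laplacian of `f : ℝ^d → ℝ` as the sum of second directional derivatives
along the standard orthonormal basis. -/
noncomputable def lap {d : ℕ} (f : EuclideanSpace ℝ (Fin d) → ℝ)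
    (x : EuclideanSpace ℝ (Fin d)) : ℝ :=
  ∑ i : Fin d,
    fderiv ℝ (fun y => fderiv ℝ f y (EuclideanSpace.single i 1)) x (EuclideanSpace.single i 1)

/-!
Both `U` and `W` are radial, `u(‖p‖)` and `w(‖p‖)`, so away from the origin `∇U(p) = u'(r) p / r`
and `ΔW(p) = w''(r) + (d - 1) w'(r) / r` with `r = ‖p‖`. Hence
`ΔW - ∇U·∇W = c e^{cr} ((d - 1)/r + c - u'(r))`, where `u'(r) = β r / √(1 + r²) ≥ β / √2` once
`r ≥ 1`, and the smallness condition on `(d - 1)/R + c` leaves `-(cβ / (2√2)) e^{cr}`.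
-/

open Real Filter Topology

theorem hasDerivAt_mul_sqrt_one_add_sq (β r : ℝ) :
    HasDerivAt (fun r => β * √(1 + r ^ 2)) (β * r / √(1 + r ^ 2)) r := by
  have h := ((hasDerivAt_pow 2 r).const_add 1).sqrt (by positivity : (0 : ℝ) < 1 + r ^ 2).ne'
  refine (h.const_mul β).congr_deriv ?_
  norm_num
  field_simp

theorem hasDerivAt_exp_const_mul (c r : ℝ) :
    HasDerivAt (fun r => exp (c * r)) (c * exp (c * r)) r := by
  simpa [mul_comm] using ((hasDerivAt_id' r).const_mul c).exp

theorem div_sqrt_two_le_mul_div_sqrt_one_add_sq {β r : ℝ} (hβ : 0 ≤ β) (hr : 1 ≤ r) :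
    β / √2 ≤ β * r / √(1 + r ^ 2) := by
  have hs : √(1 + r ^ 2) ≤ √2 * r :=
    calc √(1 + r ^ 2) ≤ √(2 * r ^ 2) := sqrt_le_sqrt (by nlinarith)
      _ = √2 * r := by rw [sqrt_mul zero_le_two, sqrt_sq (by linarith)]
  rw [div_le_div_iff₀ (by positivity) (by positivity)]
  nlinarith [mul_le_mul_of_nonneg_left hs hβ]

section Radial

variable {E : Type*} [NormedAddCommGroup E] [InnerProductSpace ℝ E]

theorem hasFDerivAt_norm_of_ne_zero {x : E} (hx : x ≠ 0) :
    HasFDerivAt (‖·‖) (‖x‖⁻¹ • innerSL ℝ x) x := by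
  have h := (hasStrictFDerivAt_norm_sq x).hasFDerivAt.sqrt (by positivity)
  simp only [sqrt_sq (norm_nonneg _)] at h
  refine h.congr_fderiv ?_
  ext
  simp
  field_simp

theorem HasDerivAt.hasFDerivAt_comp_norm {φ : ℝ → ℝ} {φ' : ℝ} {x : E}
    (hφ : HasDerivAt φ φ' ‖x‖) (hx : x ≠ 0) :
    HasFDerivAt (fun y => φ ‖y‖) ((φ' / ‖x‖) • innerSL ℝ x) x :=
  (hφ.comp_hasFDerivAt x (hasFDerivAt_norm_of_ne_zero hx)).congr_fderiv
    (by rw [smul_smul, div_eq_mul_inv])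

theorem HasDerivAt.hasGradientAt_comp_norm [CompleteSpace E] {φ : ℝ → ℝ} {φ' : ℝ} {x : E}
    (hφ : HasDerivAt φ φ' ‖x‖) (hx : x ≠ 0) :
    HasGradientAt (fun y => φ ‖y‖) ((φ' / ‖x‖) • x) x :=
  (hφ.hasFDerivAt_comp_norm hx).congr_fderiv (by ext; simp)

theorem real_inner_div_norm_smul_self {x : E} (hx : x ≠ 0) (a b : ℝ) :
    inner ℝ ((a / ‖x‖) • x) ((b / ‖x‖) • x) = a * b := by
  rw [real_inner_smul_left, real_inner_smul_right, real_inner_self_eq_norm_sq]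
  field_simp

theorem gradient_mul_sqrt_one_add_norm_sq [CompleteSpace E] (β : ℝ) {x : E} (hx : x ≠ 0) :
    gradient (fun q : E => β * √(1 + ‖q‖ ^ 2)) x = (β * ‖x‖ / √(1 + ‖x‖ ^ 2) / ‖x‖) • x :=
  ((hasDerivAt_mul_sqrt_one_add_sq β ‖x‖).hasGradientAt_comp_norm hx).gradient

theorem gradient_exp_mul_norm [CompleteSpace E] (c : ℝ) {x : E} (hx : x ≠ 0) :
    gradient (fun q : E => exp (c * ‖q‖)) x = (c * exp (c * ‖x‖) / ‖x‖) • x :=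
  ((hasDerivAt_exp_const_mul c ‖x‖).hasGradientAt_comp_norm hx).gradient

end Radial

section Euclidean

variable {d : ℕ} {φ φ' : ℝ → ℝ} {φ'' : ℝ} {p : EuclideanSpace ℝ (Fin d)}

theorem fderiv_fderiv_comp_norm_single (hp : p ≠ 0)
    (hφ : ∀ᶠ r in 𝓝 ‖p‖, HasDerivAt φ (φ' r) r) (hφ' : HasDerivAt φ' φ'' ‖p‖) (i : Fin d) :
    fderiv ℝ (fun y => fderiv ℝ (fun q : EuclideanSpace ℝ (Fin d) => φ ‖q‖) y
        (EuclideanSpace.single i 1)) p (EuclideanSpace.single i 1)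
      = φ'' * (p i / ‖p‖) ^ 2 + φ' ‖p‖ / ‖p‖ * (1 - (p i / ‖p‖) ^ 2) := by
  have hfirst : (fun y => fderiv ℝ (fun q : EuclideanSpace ℝ (Fin d) => φ ‖q‖) y
      (EuclideanSpace.single i 1)) =ᶠ[𝓝 p] fun y => φ' ‖y‖ / ‖y‖ * y i := by
    filter_upwards [(continuous_norm.tendsto p).eventually hφ, eventually_ne_nhds hp]
      with y hy hy0
    rw [(hy.hasFDerivAt_comp_norm hy0).fderiv]
    simp [EuclideanSpace.inner_single_right]
  have hψ : HasDerivAt (fun r => φ' r / r) ((φ'' * ‖p‖ - φ' ‖p‖) / ‖p‖ ^ 2) ‖p‖ := by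
    simpa using hφ'.fun_div (hasDerivAt_id' ‖p‖) (norm_ne_zero_iff.2 hp)
  have hsecond : HasFDerivAt (fun y : EuclideanSpace ℝ (Fin d) => φ' ‖y‖ / ‖y‖ * y i) _ p :=
    (hψ.hasFDerivAt_comp_norm hp).mul (EuclideanSpace.proj (𝕜 := ℝ) i).hasFDerivAt
  rw [hfirst.fderiv_eq, hsecond.fderiv]
  simp [EuclideanSpace.inner_single_right]
  field_simp
  ring

theorem lap_comp_norm (hp : p ≠ 0)
    (hφ : ∀ᶠ r in 𝓝 ‖p‖, HasDerivAt φ (φ' r) r) (hφ' : HasDerivAt φ' φ'' ‖p‖) :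
    lap (fun q : EuclideanSpace ℝ (Fin d) => φ ‖q‖) p = φ'' + ((d : ℝ) - 1) / ‖p‖ * φ' ‖p‖ := by
  have hunit : ∑ i, (p i / ‖p‖) ^ 2 = 1 := by
    simp_rw [div_pow, ← Finset.sum_div, ← EuclideanSpace.real_norm_sq_eq]
    exact div_self (by simpa using hp)
  simp only [lap, fderiv_fderiv_comp_norm_single hp hφ hφ']
  rw [Finset.sum_add_distrib, ← Finset.mul_sum, ← Finset.mul_sum, Finset.sum_sub_distrib, hunit]
  simp
  ring

theorem lap_exp_mul_norm (c : ℝ) (hp : p ≠ 0) :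
    lap (fun q : EuclideanSpace ℝ (Fin d) => exp (c * ‖q‖)) p
      = c * (((d : ℝ) - 1) / ‖p‖ + c) * exp (c * ‖p‖) := by
  rw [lap_comp_norm hp (.of_forall (hasDerivAt_exp_const_mul c))
    ((hasDerivAt_exp_const_mul c ‖p‖).const_mul c)]
  ring

end Euclidean

/-- for the ROUP potential `U(p) = β√(1+‖p‖²)`:
(1) the radial derivative `∇U(p)·(p/‖p‖) = β‖p‖/√(1+‖p‖²) ≥ β/√2` for `‖p‖ ≥ 1`;
(2) for `W(p) = e^{c‖p‖}` with `0 < c` and `R ≥ 1` such that `(d-1)/R + c ≤ β/(2√2)`,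
`ΔW(p) - ∇U(p)·∇W(p) ≤ -(cβ/(4√2)) W(p)` for all `‖p‖ ≥ R`. -/
theorem stmt_17 (d : ℕ) (hd : 1 ≤ d) (β c R : ℝ) (hβ : 0 < β) (hc : 0 < c)
    (hR : 1 ≤ R) (hsmall : ((d:ℝ) - 1) / R + c ≤ β / (2 * Real.sqrt 2)) :
    (∀ p : EuclideanSpace ℝ (Fin d), 1 ≤ ‖p‖ →
      (inner ℝ (gradient (fun q : EuclideanSpace ℝ (Fin d) =>
          β * Real.sqrt (1 + ‖q‖^2)) p) ((‖p‖)⁻¹ • p) : ℝ)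
        = β * ‖p‖ / Real.sqrt (1 + ‖p‖^2) ∧
      β / Real.sqrt 2 ≤ β * ‖p‖ / Real.sqrt (1 + ‖p‖^2)) ∧
    (∀ p : EuclideanSpace ℝ (Fin d), R ≤ ‖p‖ →
      lap (fun q : EuclideanSpace ℝ (Fin d) => Real.exp (c * ‖q‖)) p
        - (inner ℝ (gradient (fun q : EuclideanSpace ℝ (Fin d) =>
              β * Real.sqrt (1 + ‖q‖^2)) p)
            (gradient (fun q : EuclideanSpace ℝ (Fin d) => Real.exp (c * ‖q‖)) p) : ℝ)
        ≤ -(c * β / (4 * Real.sqrt 2)) * Real.exp (c * ‖p‖)) := by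
  have ne_zero {p : EuclideanSpace ℝ (Fin d)} (hp : 1 ≤ ‖p‖) : p ≠ 0 :=
    norm_pos_iff.1 (by linarith)
  refine ⟨fun p hp => ⟨?_, div_sqrt_two_le_mul_div_sqrt_one_add_sq hβ.le hp⟩, fun p hRp => ?_⟩
  · rw [gradient_mul_sqrt_one_add_norm_sq β (ne_zero hp), inv_eq_one_div,
      real_inner_div_norm_smul_self (ne_zero hp), mul_one]
  have hp : 1 ≤ ‖p‖ := hR.trans hRp
  have hdrift : ((d : ℝ) - 1) / ‖p‖ + c ≤ β / (2 * √2) := by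
    have hd' : (0 : ℝ) ≤ d - 1 := sub_nonneg.2 (Nat.one_le_cast.2 hd)
    linarith [div_le_div_of_nonneg_left hd' (by linarith) hRp]
  rw [lap_exp_mul_norm c (ne_zero hp), gradient_mul_sqrt_one_add_norm_sq β (ne_zero hp),
    gradient_exp_mul_norm c (ne_zero hp), real_inner_div_norm_smul_self (ne_zero hp)]
  calc c * (((d : ℝ) - 1) / ‖p‖ + c) * exp (c * ‖p‖)
        - β * ‖p‖ / √(1 + ‖p‖ ^ 2) * (c * exp (c * ‖p‖))
      ≤ c * (β / (2 * √2)) * exp (c * ‖p‖) - β / √2 * (c * exp (c * ‖p‖)) := by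
        gcongr c * ?_ * _ - ?_ * _
        exact div_sqrt_two_le_mul_div_sqrt_one_add_sq hβ.le hp
    _ = -(c * β / (2 * √2)) * exp (c * ‖p‖) := by
        field_simp
        ring
    _ ≤ -(c * β / (4 * √2)) * exp (c * ‖p‖) := by
        gcongr
        norm_num
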